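/- Let H be a Hopf algebra over a field k with antipode S, M an H-tetramodule, and f : M → H an H-bimodule map which is a coderivation (so that f : M → H is a Hopf algebra object in the Loday–Pirashvili category of linear maps). Then: (1) f restricts to a map f̃ : ⁱⁿᵛM → ker ε on the left-invariants ⁱⁿᵛM := {m ∈ M : m₍₋₁₎ ⊗ m₍₀₎ = 1 ⊗ m}, and f̃ is a morphism of Yetter–Drinfel'd modules over H, where ⁱⁿᵛM carries the right adjoint action m ⊳ h := S(h₍₁₎) m h₍₂₎ and the right coaction restricted from M, and ker ε carries the right adjoint action and the coaction Δ̃(h) = h₍₁₎ ⊗ h₍₂₎ − 1 ⊗ h; (2) the operation x ◁ y := x ⊳ f̃(y) = S(f̃(y)₍₁₎) x f̃(y)₍₂₎ together with the Yetter–Drinfel'd braiding τ(x ⊗ y) = y₍₀₎ ⊗ x ⊳ y₍₁₎ turns ⁱⁿᵛM into a braided Leibniz algebra: (x ◁ y) ◁ z = x ◁ (y ◁ z) + (x ◁ z⟨1⟩) ◁ y⟨2⟩ for all x, y, z ∈ ⁱⁿᵛM, where τ(y ⊗ z) = z⟨1⟩ ⊗ y⟨2⟩. -/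

import Mathlib

/-!
For a left-invariant `m` the coderivation identity reads `Δ(f m) = 1 ⊗ f m + f(m₍₀₎) ⊗ m₍₁₎`.
Applying `id ⊗ ε` gives `ε(f m) = 0`, and the identity itself is the colinearity of `f̃`.
Since `f` is a bimodule map it intertwines the adjoint actions, which are right actions because
`S` is anti-multiplicative. Left-invariance of `m ⊳ h` follows from the coactions being bimodule
maps and `Δ(S h) = S(h₍₂₎) ⊗ S(h₍₁₎)`. For the Leibniz identity, `(x ◁ y) ◁ z = x ⊳ (f y · f z)`,
and the Hopf identity `g w = w₍₁₎ (g ⊳ w₍₂₎)` applied to `w = f z`, together with the splitting of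
`Δ(f z)` above, gives `f y · f z = f y ⊳ f z + f(z₍₀₎) (f y ⊳ z₍₁₎)`; these two summands
produce the two terms on the right.
-/

open TensorProduct LinearMap

section Defs

variable (k H M : Type) [Field k] [Ring H] [HopfAlgebra k H]
  [AddCommGroup M] [Module k M]

/-- The right adjoint action `m ⊗ h ↦ S(h₍₁₎) m h₍₂₎` on an `H`-bimodule `M` with
left action `lact` and right action `ract`. -/
noncomputable def adActM (lact : H ⊗[k] M →ₗ[k] M) (ract : M ⊗[k] H →ₗ[k] M) :
    M ⊗[k] H →ₗ[k] M :=
  ract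
  ∘ₗ (rTensor H (lact ∘ₗ (TensorProduct.comm k M H).toLinearMap))
  ∘ₗ (TensorProduct.assoc k M H H).symm.toLinearMap
  ∘ₗ (lTensor M (rTensor H (HopfAlgebra.antipode (R := k))))
  ∘ₗ (lTensor M (Coalgebra.comul (R := k)))

/-- The right adjoint action `g ⊗ h ↦ S(h₍₁₎) g h₍₂₎` of `H` on itself. -/
noncomputable def adActH : H ⊗[k] H →ₗ[k] H :=
  adActM k H H (LinearMap.mul' k H) (LinearMap.mul' k H)

/-- Diagonal left `H`-action on `H ⊗ M`: `g ⊗ (a ⊗ m) ↦ g₍₁₎a ⊗ g₍₂₎m`. -/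
noncomputable def diagLHM (lact : H ⊗[k] M →ₗ[k] M) :
    H ⊗[k] (H ⊗[k] M) →ₗ[k] H ⊗[k] M :=
  (TensorProduct.map (LinearMap.mul' k H) lact)
  ∘ₗ (TensorProduct.tensorTensorTensorComm k H H H M).toLinearMap
  ∘ₗ (rTensor (H ⊗[k] M) (Coalgebra.comul (R := k)))

/-- Diagonal right `H`-action on `H ⊗ M`: `(a ⊗ m) ⊗ g ↦ ag₍₁₎ ⊗ mg₍₂₎`. -/
noncomputable def diagRHM (ract : M ⊗[k] H →ₗ[k] M) :
    (H ⊗[k] M) ⊗[k] H →ₗ[k] H ⊗[k] M :=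
  (TensorProduct.map (LinearMap.mul' k H) ract)
  ∘ₗ (TensorProduct.tensorTensorTensorComm k H M H H).toLinearMap
  ∘ₗ (lTensor (H ⊗[k] M) (Coalgebra.comul (R := k)))

/-- Diagonal left `H`-action on `M ⊗ H`: `g ⊗ (m ⊗ a) ↦ g₍₁₎m ⊗ g₍₂₎a`. -/
noncomputable def diagLMH (lact : H ⊗[k] M →ₗ[k] M) :
    H ⊗[k] (M ⊗[k] H) →ₗ[k] M ⊗[k] H :=
  (TensorProduct.map lact (LinearMap.mul' k H))
  ∘ₗ (TensorProduct.tensorTensorTensorComm k H H M H).toLinearMap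
  ∘ₗ (rTensor (M ⊗[k] H) (Coalgebra.comul (R := k)))

/-- Diagonal right `H`-action on `M ⊗ H`: `(m ⊗ a) ⊗ g ↦ mg₍₁₎ ⊗ ag₍₂₎`. -/
noncomputable def diagRMH (ract : M ⊗[k] H →ₗ[k] M) :
    (M ⊗[k] H) ⊗[k] H →ₗ[k] M ⊗[k] H :=
  (TensorProduct.map ract (LinearMap.mul' k H))
  ∘ₗ (TensorProduct.tensorTensorTensorComm k M H H H).toLinearMap
  ∘ₗ (lTensor (M ⊗[k] H) (Coalgebra.comul (R := k)))

end Defs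

open HopfAlgebra WithConv
open scoped Coalgebra

section Coalgebra

open Coalgebra

variable {R A B V : Type*} [CommSemiring R] [AddCommMonoid A] [Module R A] [Coalgebra R A]
  [Semiring B] [Algebra R B] [AddCommMonoid V] [Module R V]

theorem map_rTensor_comul_comul {ψ : A ⊗[R] A →ₗ[R] B}
    (hψ : ψ ∘ₗ comul = Algebra.linearMap R B ∘ₗ counit) (Q : A →ₗ[R] V) (a : A) :
    map ψ Q (rTensor A comul (comul a)) = 1 ⊗ₜ Q a := by
  rw [← comp_apply (map ψ Q), map_comp_rTensor, hψ, ← (ℛ R a).eq]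
  simp only [map_sum, map_tmul, comp_apply, Algebra.linearMap_apply,
    Algebra.algebraMap_eq_smul_one, smul_tmul, ← tmul_sum, ← map_smul]
  rw [← map_sum, sum_counit_smul]

theorem map_comul_comp_comul :
    map comul comul ∘ₗ comul (R := R) (A := A) =
      (TensorProduct.assoc R A A (A ⊗[R] A)).symm.toLinearMap ∘ₗ
        lTensor A (TensorProduct.assoc R A A A).toLinearMap ∘ₗ
        lTensor A (rTensor A comul ∘ₗ comul) ∘ₗ comul := by
  simp only [coassoc_simps]

end Coalgebra

section HopfAlgebra

variable {R A V : Type*} [CommSemiring R] [Semiring A] [HopfAlgebra R A]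
  [AddCommMonoid V] [Module R V]

noncomputable def antipodeMulMiddle (P : A ⊗[R] A →ₗ[R] V) :
    (A ⊗[R] A) ⊗[R] (A ⊗[R] A) →ₗ[R] A ⊗[R] V :=
  map (mul' R A ∘ₗ rTensor A (antipode R)) P
    ∘ₗ (tensorTensorTensorComm R A A A A).toLinearMap
    ∘ₗ rTensor (A ⊗[R] A) (TensorProduct.comm R A A).toLinearMap

@[simp]
theorem antipodeMulMiddle_tmul (P : A ⊗[R] A →ₗ[R] V) (a b c d : A) :
    antipodeMulMiddle P ((a ⊗ₜ b) ⊗ₜ (c ⊗ₜ d)) = (antipode R b * c) ⊗ₜ P (a ⊗ₜ d) := by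
  simp [antipodeMulMiddle]

/-- In Sweedler notation: `S(a₍₂₎) a₍₃₎ ⊗ P(a₍₁₎ ⊗ a₍₄₎) = 1 ⊗ P(a₍₁₎ ⊗ a₍₂₎)`. -/
theorem antipodeMulMiddle_map_comul_comul (P : A ⊗[R] A →ₗ[R] V) (a : A) :
    antipodeMulMiddle P (map Coalgebra.comul Coalgebra.comul (Coalgebra.comul a))
      = 1 ⊗ₜ P (Coalgebra.comul a) := by
  have hcancel : antipodeMulMiddle P
      ∘ₗ (TensorProduct.assoc R A A (A ⊗[R] A)).symm.toLinearMap
      ∘ₗ lTensor A (TensorProduct.assoc R A A A).toLinearMap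
      ∘ₗ lTensor A (rTensor A Coalgebra.comul ∘ₗ Coalgebra.comul)
      = TensorProduct.mk R A V 1 ∘ₗ P := by
    refine TensorProduct.ext' fun x b => ?_
    have hx : antipodeMulMiddle P
        ∘ₗ (TensorProduct.assoc R A A (A ⊗[R] A)).symm.toLinearMap
        ∘ₗ TensorProduct.mk R A _ x ∘ₗ (TensorProduct.assoc R A A A).toLinearMap
        = map (mul' R A ∘ₗ rTensor A (antipode R)) (P ∘ₗ TensorProduct.mk R A A x) := by
      ext; simp
    simpa using congr($hx (rTensor A Coalgebra.comul (Coalgebra.comul b))).trans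
      (map_rTensor_comul_comul mul_antipode_rTensor_comul _ b)
  rw [← comp_apply (map _ _), map_comul_comp_comul]
  simpa using congr($hcancel (Coalgebra.comul a))

theorem comul_antipode (a : A) :
    Coalgebra.comul (antipode R a)
      = map (antipode R) (antipode R) (TensorProduct.comm R A A (Coalgebra.comul a)) := by
  set G : A →ₗ[R] A ⊗[R] A := map (antipode R) (antipode R)
    ∘ₗ (TensorProduct.comm R A A).toLinearMap ∘ₗ Coalgebra.comul
  -- `G` is a left and `comul ∘ antipode` a right convolution inverse of `comul`.
  have hG : toConv G * toConv Coalgebra.comul = 1 := by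
    have hmul : mul' R (A ⊗[R] A) ∘ₗ map (map (antipode R) (antipode R)
          ∘ₗ (TensorProduct.comm R A A).toLinearMap) LinearMap.id
        = antipodeMulMiddle (mul' R A ∘ₗ rTensor A (antipode R)) := by
      ext; simp
    ext a
    calc (toConv G * toConv Coalgebra.comul : WithConv (A →ₗ[R] A ⊗[R] A)) a
        = antipodeMulMiddle (mul' R A ∘ₗ rTensor A (antipode R))
            (map Coalgebra.comul Coalgebra.comul (Coalgebra.comul a)) := by
          simp [G, ← hmul, map_map, comp_assoc]
      _ = (1 : WithConv (A →ₗ[R] A ⊗[R] A)) a := by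
          simp [antipodeMulMiddle_map_comul_comul, Algebra.algebraMap_eq_smul_one,
            Algebra.TensorProduct.one_def]
  exact congr($((left_inv_eq_right_inv hG LinearMap.comul_right_inv).symm) a)

end HopfAlgebra

section AdjointAction

variable {k H M : Type} [Field k] [Ring H] [HopfAlgebra k H] [AddCommGroup M] [Module k M]
  (lact : H ⊗[k] M →ₗ[k] M) (ract : M ⊗[k] H →ₗ[k] M)

theorem adActM_tmul {ι : Type*} (m : M) {h : H} (r : Coalgebra.Repr k h ι) :
    adActM k H M lact ract (m ⊗ₜ h)
      = ∑ i ∈ r.index, ract (lact (antipode k (r.left i) ⊗ₜ m) ⊗ₜ r.right i) := by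
  simp [adActM, ← r.eq, tmul_sum]

theorem adActH_tmul {ι : Type*} (g : H) {h : H} (r : Coalgebra.Repr k h ι) :
    adActH k H (g ⊗ₜ h) = ∑ i ∈ r.index, antipode k (r.left i) * g * r.right i := by
  simp [adActH, adActM_tmul _ _ g r]

theorem adActM_adActM
    (h_lact_mul : ∀ (a b : H) (m : M), lact (a ⊗ₜ lact (b ⊗ₜ m)) = lact ((a * b) ⊗ₜ m))
    (h_ract_mul : ∀ (m : M) (a b : H), ract (ract (m ⊗ₜ a) ⊗ₜ b) = ract (m ⊗ₜ (a * b)))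
    (h_commute : ∀ (a : H) (m : M) (b : H),
      ract (lact (a ⊗ₜ m) ⊗ₜ b) = lact (a ⊗ₜ ract (m ⊗ₜ b)))
    (m : M) (p q : H) :
    adActM k H M lact ract (adActM k H M lact ract (m ⊗ₜ p) ⊗ₜ q)
      = adActM k H M lact ract (m ⊗ₜ (p * q)) := by
  rw [adActM_tmul _ _ _ (ℛ k q), adActM_tmul _ _ _ ((ℛ k p).mul (ℛ k q)),
    Coalgebra.Repr.mul_index, Finset.sum_product, Finset.sum_comm]
  refine Finset.sum_congr rfl fun j _ => ?_
  simp only [adActM_tmul _ _ m (ℛ k p), tmul_sum, sum_tmul, map_sum,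
    Coalgebra.Repr.mul_left, Coalgebra.Repr.mul_right, antipode_mul_antidistrib,
    ← h_commute, h_ract_mul, h_lact_mul]

theorem map_adActM_of_bimoduleHom {f : M →ₗ[k] H}
    (h_fl : ∀ (a : H) (m : M), f (lact (a ⊗ₜ m)) = a * f m)
    (h_fr : ∀ (m : M) (a : H), f (ract (m ⊗ₜ a)) = f m * a) (m : M) (h : H) :
    f (adActM k H M lact ract (m ⊗ₜ h)) = adActH k H (f m ⊗ₜ h) := by
  simp [adActM_tmul _ _ m (ℛ k h), adActH_tmul (f m) (ℛ k h), h_fl, h_fr]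

end AdjointAction

theorem mul'_lTensor_adActH_comul {k H : Type} [Field k] [Ring H] [HopfAlgebra k H] (g w : H) :
    mul' k H (lTensor H (adActH k H ∘ₗ TensorProduct.mk k H H g) (Coalgebra.comul w))
      = g * w := by
  have hsplit : mul' k H ∘ₗ lTensor H (adActH k H ∘ₗ TensorProduct.mk k H H g)
      = mul' k H ∘ₗ map (mul' k H ∘ₗ lTensor H (antipode k)) (mulLeft k g)
        ∘ₗ (TensorProduct.assoc k H H H).symm.toLinearMap ∘ₗ lTensor H Coalgebra.comul := by
    ext x b
    simp [adActH_tmul g (ℛ k b), ← (ℛ k b).eq, tmul_sum, mul_assoc]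
  rw [← comp_apply (mul' k H), hsplit]
  simp only [comp_apply, LinearEquiv.coe_coe, Coalgebra.coassoc_symm_apply,
    map_rTensor_comul_comul (ψ := mul' k H ∘ₗ lTensor H (antipode k)) mul_antipode_lTensor_comul,
    mul'_apply, one_mul, mulLeft_apply]

section Invariants

variable {k H M : Type} [Field k] [Ring H] [HopfAlgebra k H] [AddCommGroup M] [Module k M]
  {lact : H ⊗[k] M →ₗ[k] M} {ract : M ⊗[k] H →ₗ[k] M}
  {lam : M →ₗ[k] H ⊗[k] M} {ρ : M →ₗ[k] M ⊗[k] H} {f : M →ₗ[k] H}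

theorem lam_adActM_of_lam_eq
    (hcl_l : lam ∘ₗ lact = diagLHM k H M lact ∘ₗ lTensor H lam)
    (hcl_r : lam ∘ₗ ract = diagRHM k H M ract ∘ₗ rTensor H lam)
    {m : M} (hm : lam m = (1 : H) ⊗ₜ[k] m) (h : H) :
    lam (adActM k H M lact ract (m ⊗ₜ h)) = (1 : H) ⊗ₜ[k] adActM k H M lact ract (m ⊗ₜ h) := by
  set P : H ⊗[k] H →ₗ[k] M :=
    ract ∘ₗ rTensor H (lact ∘ₗ (TensorProduct.mk k H M).flip m ∘ₗ antipode k)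
  have hP : adActM k H M lact ract (m ⊗ₜ h) = P (Coalgebra.comul h) := by
    simp [adActM_tmul _ _ m (ℛ k h), P, ← (ℛ k h).eq]
  have hlamP : lam ∘ₗ P = antipodeMulMiddle P ∘ₗ map Coalgebra.comul Coalgebra.comul := by
    refine TensorProduct.ext' fun x y => ?_
    have hl := congr($hcl_l (antipode k x ⊗ₜ m))
    have hr := congr($hcl_r (lact (antipode k x ⊗ₜ m) ⊗ₜ y))
    simp only [comp_apply, lTensor_tmul, rTensor_tmul, hm] at hl hr
    simp only [P, comp_apply, rTensor_tmul, flip_apply, TensorProduct.mk_apply]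
    rw [hr, hl]
    simp only [diagRHM, diagLHM, coe_comp, LinearEquiv.coe_coe, Function.comp_apply,
      rTensor_tmul, lTensor_tmul, comul_antipode, ← (ℛ k x).eq, ← (ℛ k y).eq, map_sum, comm_tmul,
      map_tmul, sum_tmul, tmul_sum, tensorTensorTensorComm_tmul, mul'_apply, mul_one,
      antipodeMulMiddle_tmul, flip_apply, mk_apply]
    exact Finset.sum_comm
  rw [hP, ← comp_apply (f := lam), hlamP, comp_apply, antipodeMulMiddle_map_comul_comul]

theorem counit_eq_zero_of_coderivation
    (hr_counit : ∀ m : M,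
      (TensorProduct.rid k M) ((lTensor M (Coalgebra.counit (R := k))) (ρ m)) = m)
    (hf : ∀ m : M,
      Coalgebra.comul (R := k) (f m) = (lTensor H f) (lam m) + (rTensor H f) (ρ m))
    {m : M} (hm : lam m = (1 : H) ⊗ₜ[k] m) :
    Coalgebra.counit (R := k) (f m) = 0 := by
  have hnat : TensorProduct.rid k H ∘ₗ lTensor H Coalgebra.counit ∘ₗ rTensor H f
      = f ∘ₗ TensorProduct.rid k M ∘ₗ lTensor M Coalgebra.counit := by
    ext; simp
  have h := congr(TensorProduct.rid k H (lTensor H Coalgebra.counit $(hf m)))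
  have hρ := congr($hnat (ρ m))
  simp only [comp_apply, LinearEquiv.coe_coe] at hρ
  rw [map_add, map_add, hρ, hr_counit, hm, Coalgebra.lTensor_counit_comul] at h
  simp only [lTensor_tmul, TensorProduct.rid_tmul, one_smul, right_eq_add] at h
  simpa using congr(Coalgebra.counit (R := k) $h)

theorem coaction_mem_range_rTensor_invariants
    (hbicompat : ∀ m : M,
      (TensorProduct.assoc k H M H) ((rTensor H lam) (ρ m)) = (lTensor H ρ) (lam m))
    {m : M} (hm : lam m = (1 : H) ⊗ₜ[k] m) :
    ρ m ∈ range (rTensor H (ker (lam - TensorProduct.mk k H M 1)).subtype) := by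
  have hunit : rTensor H (TensorProduct.mk k H M 1)
      = (TensorProduct.assoc k H M H).symm.toLinearMap ∘ₗ TensorProduct.mk k H (M ⊗[k] H) 1 := by
    ext; simp
  have hzero : rTensor H (lam - TensorProduct.mk k H M 1) (ρ m) = 0 := by
    rw [rTensor_sub]
    change rTensor H lam (ρ m) - rTensor H (TensorProduct.mk k H M 1) (ρ m) = 0
    rw [sub_eq_zero, hunit, comp_apply, LinearEquiv.coe_coe, LinearEquiv.eq_symm_apply, hbicompat,
      hm, lTensor_tmul, mk_apply]
  exact (Module.Flat.rTensor_exact H (exact_subtype_ker_map _) (ρ m)).mp hzero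

theorem adActM_braided_leibniz
    (h_lact_mul : ∀ (a b : H) (m : M), lact (a ⊗ₜ lact (b ⊗ₜ m)) = lact ((a * b) ⊗ₜ m))
    (h_ract_mul : ∀ (m : M) (a b : H), ract (ract (m ⊗ₜ a) ⊗ₜ b) = ract (m ⊗ₜ (a * b)))
    (h_commute : ∀ (a : H) (m : M) (b : H),
      ract (lact (a ⊗ₜ m) ⊗ₜ b) = lact (a ⊗ₜ ract (m ⊗ₜ b)))
    (h_fl : ∀ (a : H) (m : M), f (lact (a ⊗ₜ m)) = a * f m)
    (h_fr : ∀ (m : M) (a : H), f (ract (m ⊗ₜ a)) = f m * a)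
    (hf : ∀ m : M,
      Coalgebra.comul (R := k) (f m) = (lTensor H f) (lam m) + (rTensor H f) (ρ m))
    (x y : M) {z : M} (hz : lam z = (1 : H) ⊗ₜ[k] z) :
    adActM k H M lact ract (adActM k H M lact ract (x ⊗ₜ f y) ⊗ₜ f z)
      = adActM k H M lact ract (x ⊗ₜ f (adActM k H M lact ract (y ⊗ₜ f z)))
        + (adActM k H M lact ract ∘ₗ TensorProduct.map
            (adActM k H M lact ract ∘ₗ (TensorProduct.mk k M H) x ∘ₗ f)
            (f ∘ₗ adActM k H M lact ract ∘ₗ (TensorProduct.mk k M H) y)) (ρ z) := by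
  set ad := adActM k H M lact ract
  have hact := adActM_adActM lact ract h_lact_mul h_ract_mul h_commute
  have hequiv := map_adActM_of_bimoduleHom lact ract h_fl h_fr
  set N : H ⊗[k] H →ₗ[k] H := mul' k H ∘ₗ lTensor H (adActH k H ∘ₗ TensorProduct.mk k H H (f y))
  have hbraid : ad ∘ₗ TensorProduct.map (ad ∘ₗ TensorProduct.mk k M H x ∘ₗ f)
      (f ∘ₗ ad ∘ₗ TensorProduct.mk k M H y)
        = ad ∘ₗ TensorProduct.mk k M H x ∘ₗ N ∘ₗ rTensor H f := by
    refine TensorProduct.ext' fun z₀ z₁ => ?_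
    simp [ad, N, hequiv, hact]
  have hN : adActH k H (f y ⊗ₜ f z) + N (rTensor H f (ρ z)) = f y * f z := by
    rw [← mul'_lTensor_adActH_comul (k := k) (f y) (f z), hf, hz]
    simp [N]
  rw [hbraid, comp_apply, comp_apply, comp_apply, mk_apply, hequiv, ← map_add, ← tmul_add, hN,
    hact]

end Invariants

theorem stmt16_general (k H M : Type) [Field k] [Ring H] [HopfAlgebra k H]
    [AddCommGroup M] [Module k M]
    (lact : H ⊗[k] M →ₗ[k] M) (ract : M ⊗[k] H →ₗ[k] M)
    (lam : M →ₗ[k] H ⊗[k] M) (ρ : M →ₗ[k] M ⊗[k] H)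
    -- M is an H-bimodule
    (h_lact_mul : ∀ (a b : H) (m : M), lact (a ⊗ₜ lact (b ⊗ₜ m)) = lact ((a * b) ⊗ₜ m))
    (h_ract_mul : ∀ (m : M) (a b : H), ract (ract (m ⊗ₜ a) ⊗ₜ b) = ract (m ⊗ₜ (a * b)))
    (h_commute : ∀ (a : H) (m : M) (b : H),
      ract (lact (a ⊗ₜ m) ⊗ₜ b) = lact (a ⊗ₜ ract (m ⊗ₜ b)))
    -- M is an H-bicomodule
    (hr_counit : ∀ m : M,
      (TensorProduct.rid k M) ((lTensor M (Coalgebra.counit (R := k))) (ρ m)) = m)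
    (hbicompat : ∀ m : M,
      (TensorProduct.assoc k H M H) ((rTensor H lam) (ρ m)) = (lTensor H ρ) (lam m))
    -- the coactions are bimodule maps (M is a tetramodule)
    (hcl_l : lam ∘ₗ lact = diagLHM k H M lact ∘ₗ lTensor H lam)
    (hcl_r : lam ∘ₗ ract = diagRHM k H M ract ∘ₗ rTensor H lam)
    -- f is an H-bimodule map and a coderivation
    (f : M →ₗ[k] H)
    (h_fl : ∀ (a : H) (m : M), f (lact (a ⊗ₜ m)) = a * f m)
    (h_fr : ∀ (m : M) (a : H), f (ract (m ⊗ₜ a)) = f m * a)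
    (hf : ∀ m : M,
      Coalgebra.comul (R := k) (f m) = (lTensor H f) (lam m) + (rTensor H f) (ρ m)) :
    -- f̃ takes values in ker ε
    (∀ m : M, lam m = (1 : H) ⊗ₜ[k] m → Coalgebra.counit (R := k) (f m) = 0) ∧
    -- the adjoint action preserves the left-invariants
    (∀ (m : M) (h : H), lam m = (1 : H) ⊗ₜ[k] m →
      lam (adActM k H M lact ract (m ⊗ₜ h))
        = (1 : H) ⊗ₜ[k] adActM k H M lact ract (m ⊗ₜ h)) ∧
    -- f̃ is equivariant for the right adjoint actions
    (∀ (m : M) (h : H), lam m = (1 : H) ⊗ₜ[k] m →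
      f (adActM k H M lact ract (m ⊗ₜ h)) = adActH k H (f m ⊗ₜ h)) ∧
    -- f̃ is right H-colinear
    (∀ m : M, lam m = (1 : H) ⊗ₜ[k] m →
      Coalgebra.comul (R := k) (f m) - (1 : H) ⊗ₜ[k] f m = (rTensor H f) (ρ m)) ∧
    -- the coaction of M preserves the left-invariants
    (∀ m : M, lam m = (1 : H) ⊗ₜ[k] m →
      ρ m ∈ LinearMap.range
        (rTensor H (LinearMap.ker (lam - (TensorProduct.mk k H M) 1)).subtype)) ∧
    -- the braided Leibniz identity on the left-invariants
    (∀ x y z : M,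
      lam x = (1 : H) ⊗ₜ[k] x → lam y = (1 : H) ⊗ₜ[k] y → lam z = (1 : H) ⊗ₜ[k] z →
      adActM k H M lact ract (adActM k H M lact ract (x ⊗ₜ f y) ⊗ₜ f z)
        = adActM k H M lact ract (x ⊗ₜ f (adActM k H M lact ract (y ⊗ₜ f z)))
          + (adActM k H M lact ract ∘ₗ TensorProduct.map
              (adActM k H M lact ract ∘ₗ (TensorProduct.mk k M H) x ∘ₗ f)
              (f ∘ₗ adActM k H M lact ract ∘ₗ (TensorProduct.mk k M H) y)) (ρ z)) := by
  refine ⟨fun m hm => counit_eq_zero_of_coderivation hr_counit hf hm,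
    fun m h hm => lam_adActM_of_lam_eq hcl_l hcl_r hm h,
    fun m h _ => map_adActM_of_bimoduleHom lact ract h_fl h_fr m h,
    fun m hm => ?_,
    fun m hm => coaction_mem_range_rTensor_invariants hbicompat hm,
    fun x y z _ _ hz =>
      adActM_braided_leibniz h_lact_mul h_ract_mul h_commute h_fl h_fr hf x y hz⟩
  rw [hf m, hm, lTensor_tmul, add_sub_cancel_left]

/-- (Main theorem.)  Let `H` be a Hopf algebra, `M` an
`H`-tetramodule and `f : M → H` an `H`-bimodule map which is a coderivation, i.e.
`f : M → H` is a Hopf algebra object in the Loday–Pirashvili category of linear maps.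
Then (1) `f` restricts to a morphism `f̃ : ⁱⁿᵛM → ker ε` of Yetter–Drinfel'd modules
over `H`, where `ⁱⁿᵛM` carries the right adjoint action `m ⊳ h = S(h₍₁₎) m h₍₂₎` and
the right coaction restricted from `M`, and `ker ε` carries the right adjoint action
and the coaction `Δ̃(h) = h₍₁₎ ⊗ h₍₂₎ − 1 ⊗ h`; and (2) `x ◁ y := x ⊳ f̃(y)` together
with the Yetter–Drinfel'd braiding `τ(x ⊗ y) = y₍₀₎ ⊗ x ⊳ y₍₁₎` turns `ⁱⁿᵛM` into a
braided Leibniz algebra: `(x ◁ y) ◁ z = x ◁ (y ◁ z) + (x ◁ z⟨1⟩) ◁ y⟨2⟩`. -/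
theorem stmt16 (k H M : Type) [Field k] [Ring H] [HopfAlgebra k H]
    [AddCommGroup M] [Module k M]
    (lact : H ⊗[k] M →ₗ[k] M) (ract : M ⊗[k] H →ₗ[k] M)
    (lam : M →ₗ[k] H ⊗[k] M) (ρ : M →ₗ[k] M ⊗[k] H)
    -- M is an H-bimodule
    (h_lact_one : ∀ m : M, lact ((1 : H) ⊗ₜ m) = m)
    (h_lact_mul : ∀ (a b : H) (m : M), lact (a ⊗ₜ lact (b ⊗ₜ m)) = lact ((a * b) ⊗ₜ m))
    (h_ract_one : ∀ m : M, ract (m ⊗ₜ (1 : H)) = m)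
    (h_ract_mul : ∀ (m : M) (a b : H), ract (ract (m ⊗ₜ a) ⊗ₜ b) = ract (m ⊗ₜ (a * b)))
    (h_commute : ∀ (a : H) (m : M) (b : H),
      ract (lact (a ⊗ₜ m) ⊗ₜ b) = lact (a ⊗ₜ ract (m ⊗ₜ b)))
    -- M is an H-bicomodule
    (hl_counit : ∀ m : M,
      (TensorProduct.lid k M) ((rTensor M (Coalgebra.counit (R := k))) (lam m)) = m)
    (hl_coassoc : ∀ m : M,
      (TensorProduct.assoc k H H M) ((rTensor M (Coalgebra.comul (R := k))) (lam m))
        = (lTensor H lam) (lam m))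
    (hr_counit : ∀ m : M,
      (TensorProduct.rid k M) ((lTensor M (Coalgebra.counit (R := k))) (ρ m)) = m)
    (hr_coassoc : ∀ m : M,
      (TensorProduct.assoc k M H H) ((rTensor H ρ) (ρ m))
        = (lTensor M (Coalgebra.comul (R := k))) (ρ m))
    (hbicompat : ∀ m : M,
      (TensorProduct.assoc k H M H) ((rTensor H lam) (ρ m)) = (lTensor H ρ) (lam m))
    -- the coactions are bimodule maps (M is a tetramodule)
    (hcl_l : lam ∘ₗ lact = diagLHM k H M lact ∘ₗ lTensor H lam)
    (hcl_r : lam ∘ₗ ract = diagRHM k H M ract ∘ₗ rTensor H lam)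
    (hcr_l : ρ ∘ₗ lact = diagLMH k H M lact ∘ₗ lTensor H ρ)
    (hcr_r : ρ ∘ₗ ract = diagRMH k H M ract ∘ₗ rTensor H ρ)
    -- f is an H-bimodule map and a coderivation
    (f : M →ₗ[k] H)
    (h_fl : ∀ (a : H) (m : M), f (lact (a ⊗ₜ m)) = a * f m)
    (h_fr : ∀ (m : M) (a : H), f (ract (m ⊗ₜ a)) = f m * a)
    (hf : ∀ m : M,
      Coalgebra.comul (R := k) (f m) = (lTensor H f) (lam m) + (rTensor H f) (ρ m)) :
    -- f̃ takes values in ker ε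
    (∀ m : M, lam m = (1 : H) ⊗ₜ[k] m → Coalgebra.counit (R := k) (f m) = 0) ∧
    -- the adjoint action preserves the left-invariants
    (∀ (m : M) (h : H), lam m = (1 : H) ⊗ₜ[k] m →
      lam (adActM k H M lact ract (m ⊗ₜ h))
        = (1 : H) ⊗ₜ[k] adActM k H M lact ract (m ⊗ₜ h)) ∧
    -- f̃ is equivariant for the right adjoint actions
    (∀ (m : M) (h : H), lam m = (1 : H) ⊗ₜ[k] m →
      f (adActM k H M lact ract (m ⊗ₜ h)) = adActH k H (f m ⊗ₜ h)) ∧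
    -- f̃ is right H-colinear
    (∀ m : M, lam m = (1 : H) ⊗ₜ[k] m →
      Coalgebra.comul (R := k) (f m) - (1 : H) ⊗ₜ[k] f m = (rTensor H f) (ρ m)) ∧
    -- the coaction of M preserves the left-invariants
    (∀ m : M, lam m = (1 : H) ⊗ₜ[k] m →
      ρ m ∈ LinearMap.range
        (rTensor H (LinearMap.ker (lam - (TensorProduct.mk k H M) 1)).subtype)) ∧
    -- the braided Leibniz identity on the left-invariants
    (∀ x y z : M,
      lam x = (1 : H) ⊗ₜ[k] x → lam y = (1 : H) ⊗ₜ[k] y → lam z = (1 : H) ⊗ₜ[k] z →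
      adActM k H M lact ract (adActM k H M lact ract (x ⊗ₜ f y) ⊗ₜ f z)
        = adActM k H M lact ract (x ⊗ₜ f (adActM k H M lact ract (y ⊗ₜ f z)))
          + (adActM k H M lact ract ∘ₗ TensorProduct.map
              (adActM k H M lact ract ∘ₗ (TensorProduct.mk k M H) x ∘ₗ f)
              (f ∘ₗ adActM k H M lact ract ∘ₗ (TensorProduct.mk k M H) y)) (ρ z)) :=
  stmt16_general k H M lact ract lam ρ h_lact_mul h_ract_mul h_commute hr_counit hbicompat hcl_l
    hcl_r f h_fl h_fr hf
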